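/- Define γ : (ℝ²)³ → ℝ³ by γ(a₁, a₂, a₃) = (‖a₂ − a₃‖, ‖a₃ − a₁‖, ‖a₁ − a₂‖). Then for all triples A = (a₁,a₂,a₃) and B = (b₁,b₂,b₃) of points in ℝ²: d(γ(A), γ(B)) ≤ √3 · d_{E(2)}(A,B), where d on ℝ³ is the euclidean distance. -/

import Mathlib

open Matrix
open scoped ComplexOrder

/-- Frobenius norm of a real matrix: `‖A‖ = √(trace (A Aᵀ))`. -/
noncomputable def frobR {n l : ℕ} (A : Matrix (Fin n) (Fin l) ℝ) : ℝ :=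
  Real.sqrt (Matrix.trace (A * Aᵀ))

/-- Frobenius norm of a complex matrix: `‖A‖ = √(trace (A Aᴴ))`. -/
noncomputable def frobC {n l : ℕ} (A : Matrix (Fin n) (Fin l) ℂ) : ℝ :=
  Real.sqrt (Matrix.trace (A * Aᴴ)).re

open Classical in
/-- The unique positive semidefinite square root of a positive semidefinite real
symmetric matrix (junk value `0` if `M` is not positive semidefinite). -/
noncomputable def matSqrtR {k : ℕ} (M : Matrix (Fin k) (Fin k) ℝ) : Matrix (Fin k) (Fin k) ℝ :=
  if h : M.PosSemidef then
    (h.1.eigenvectorUnitary : Matrix (Fin k) (Fin k) ℝ) *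
      diagonal ((RCLike.ofReal : ℝ → ℝ) ∘ Real.sqrt ∘ h.1.eigenvalues) *
      (star h.1.eigenvectorUnitary : Matrix (Fin k) (Fin k) ℝ)
  else 0

open Classical in
/-- The unique positive semidefinite square root of a positive semidefinite hermitian
matrix (junk value `0` if `M` is not positive semidefinite). -/
noncomputable def matSqrtC {k : ℕ} (M : Matrix (Fin k) (Fin k) ℂ) : Matrix (Fin k) (Fin k) ℂ :=
  if h : M.PosSemidef then
    (h.1.eigenvectorUnitary : Matrix (Fin k) (Fin k) ℂ) *
      diagonal ((RCLike.ofReal : ℝ → ℂ) ∘ Real.sqrt ∘ h.1.eigenvalues) *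
      (star h.1.eigenvectorUnitary : Matrix (Fin k) (Fin k) ℂ)
  else 0

/-- Orbit distance for the orthogonal group `O(n)` acting by left multiplication. -/
noncomputable def dO {n l : ℕ} (A B : Matrix (Fin n) (Fin l) ℝ) : ℝ :=
  sInf {x | ∃ W ∈ Matrix.orthogonalGroup (Fin n) ℝ, x = frobR (W * A - B)}

/-- Orbit distance for the unitary group `U(n)` acting by left multiplication. -/
noncomputable def dU {n l : ℕ} (A B : Matrix (Fin n) (Fin l) ℂ) : ℝ :=
  sInf {x | ∃ W ∈ Matrix.unitaryGroup (Fin n) ℂ, x = frobC (W * A - B)}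

/-- `q𝟙ᵀ` : the `n × l` matrix each of whose columns equals `q` (real case). -/
def colMatR {n l : ℕ} (q : Fin n → ℝ) : Matrix (Fin n) (Fin l) ℝ :=
  Matrix.of fun i _ => q i

/-- `q𝟙ᵀ` : the `n × l` matrix each of whose columns equals `q` (complex case). -/
def colMatC {n l : ℕ} (q : Fin n → ℂ) : Matrix (Fin n) (Fin l) ℂ :=
  Matrix.of fun i _ => q i

/-- Orbit distance for the euclidean group `E(n) = O(n) ⋉ ℝⁿ` acting columnwise. -/
noncomputable def dE {n l : ℕ} (A B : Matrix (Fin n) (Fin l) ℝ) : ℝ :=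
  sInf {x | ∃ P ∈ Matrix.orthogonalGroup (Fin n) ℝ, ∃ q : Fin n → ℝ,
    x = frobR (P * A + colMatR q - B)}

/-- Orbit distance for the complex euclidean group `F(n) = U(n) ⋉ ℂⁿ` acting columnwise. -/
noncomputable def dF {n l : ℕ} (A B : Matrix (Fin n) (Fin l) ℂ) : ℝ :=
  sInf {x | ∃ P ∈ Matrix.unitaryGroup (Fin n) ℂ, ∃ q : Fin n → ℂ,
    x = frobC (P * A + colMatC q - B)}

/-- Column-centering `π` : subtract from each column the average of all columns (real case). -/
noncomputable def centerR {n l : ℕ} (A : Matrix (Fin n) (Fin l) ℝ) : Matrix (Fin n) (Fin l) ℝ :=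
  Matrix.of fun i j => A i j - (∑ k, A i k) / (l : ℝ)

/-- Column-centering `π_ℂ` : subtract from each column the average of all columns (complex case). -/
noncomputable def centerC {n l : ℕ} (A : Matrix (Fin n) (Fin l) ℂ) : Matrix (Fin n) (Fin l) ℂ :=
  Matrix.of fun i j => A i j - (∑ k, A i k) / (l : ℂ)

/-- Euclidean norm of a vector in `ℝⁿ`. -/
noncomputable def eunorm {n : ℕ} (v : Fin n → ℝ) : ℝ := Real.sqrt (∑ i, v i ^ 2)

/-- The side-lengths map `γ(a₁,a₂,a₃) = (‖a₂−a₃‖, ‖a₃−a₁‖, ‖a₁−a₂‖)`. -/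
noncomputable def gammaMap (a : Fin 3 → Fin 2 → ℝ) : Fin 3 → ℝ :=
  ![eunorm (a 1 - a 2), eunorm (a 2 - a 0), eunorm (a 0 - a 1)]

/-- Identify a triple of points in `ℝ²` with a `2×3` matrix whose columns are the points. -/
def toMat (a : Fin 3 → Fin 2 → ℝ) : Matrix (Fin 2) (Fin 3) ℝ :=
  Matrix.of fun i j => a j i

/-! Rigid motions preserve side lengths. So for `P ∈ O(2)` and `q`, writing `cᵢ` for the columns
of `C = P A + q 𝟙ᵀ - B`, the reverse triangle inequality gives
`|‖aᵢ - aⱼ‖ - ‖bᵢ - bⱼ‖| ≤ ‖P (aᵢ - aⱼ) - (bᵢ - bⱼ)‖ = ‖cᵢ - cⱼ‖`, and summing over the three sides,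
`∑ ‖cᵢ - cⱼ‖² = 3 ∑ ‖cᵢ‖² - ‖∑ cᵢ‖² ≤ 3 ‖C‖²`. Taking the infimum over `(P, q)` gives the bound. -/

lemma eunorm_eq_sqrt_dotProduct {n : ℕ} (v : Fin n → ℝ) : eunorm v = Real.sqrt (v ⬝ᵥ v) := by
  simp only [eunorm, dotProduct, sq]

lemma eunorm_eq_norm_toLp {n : ℕ} (v : Fin n → ℝ) : eunorm v = ‖WithLp.toLp 2 v‖ := by
  simp [eunorm, EuclideanSpace.norm_eq]

lemma eunorm_sq {n : ℕ} (v : Fin n → ℝ) : eunorm v ^ 2 = ∑ i, v i ^ 2 :=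
  Real.sq_sqrt (by positivity)

lemma eunorm_mulVec_of_mem_orthogonalGroup {n : ℕ} {P : Matrix (Fin n) (Fin n) ℝ}
    (hP : P ∈ orthogonalGroup (Fin n) ℝ) (v : Fin n → ℝ) : eunorm (P *ᵥ v) = eunorm v := by
  have hPP : Pᵀ * P = 1 := (mem_orthogonalGroup_iff' (Fin n) ℝ).1 hP
  rw [eunorm_eq_sqrt_dotProduct, eunorm_eq_sqrt_dotProduct, dotProduct_mulVec, vecMul_mulVec,
    hPP, vecMul_one]

lemma abs_eunorm_sub_eunorm_le {n : ℕ} (u v : Fin n → ℝ) :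
    |eunorm u - eunorm v| ≤ eunorm (u - v) := by
  simpa only [eunorm_eq_norm_toLp, WithLp.toLp_sub] using abs_norm_sub_norm_le _ _

lemma frobR_eq_sqrt_sum_sq {n l : ℕ} (A : Matrix (Fin n) (Fin l) ℝ) :
    frobR A = Real.sqrt (∑ i, ∑ j, A i j ^ 2) := by
  simp [frobR, trace, mul_apply, sq]

lemma le_dE {n l : ℕ} {A B : Matrix (Fin n) (Fin l) ℝ} {x : ℝ}
    (h : ∀ P ∈ orthogonalGroup (Fin n) ℝ, ∀ q, x ≤ frobR (P * A + colMatR q - B)) :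
    x ≤ dE A B :=
  le_csInf ⟨_, 1, one_mem _, 0, rfl⟩ (by rintro _ ⟨P, hP, q, rfl⟩; exact h P hP q)

lemma transpose_mul_toMat_add_colMatR_sub_toMat (a b : Fin 3 → Fin 2 → ℝ)
    (P : Matrix (Fin 2) (Fin 2) ℝ) (q : Fin 2 → ℝ) (i : Fin 3) :
    (P * toMat a + colMatR q - toMat b)ᵀ i = P *ᵥ a i + q - b i := by
  ext k
  simp only [transpose_apply, Matrix.sub_apply, Matrix.add_apply, mul_apply, toMat, colMatR,
    of_apply, mulVec, dotProduct, Pi.add_apply, Pi.sub_apply]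

lemma sq_sub_add_sq_sub_add_sq_sub_le (x y z : ℝ) :
    (y - z) ^ 2 + (z - x) ^ 2 + (x - y) ^ 2 ≤ 3 * (x ^ 2 + y ^ 2 + z ^ 2) := by
  nlinarith [sq_nonneg (x + y + z)]

lemma eunorm_gammaMap_sub_le (a b : Fin 3 → Fin 2 → ℝ) {P : Matrix (Fin 2) (Fin 2) ℝ}
    (hP : P ∈ orthogonalGroup (Fin 2) ℝ) (q : Fin 2 → ℝ) :
    eunorm (gammaMap a - gammaMap b) ≤
      Real.sqrt 3 * frobR (P * toMat a + colMatR q - toMat b) := by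
  set C := P * toMat a + colMatR q - toMat b
  have side : ∀ i j,
      (eunorm (a i - a j) - eunorm (b i - b j)) ^ 2 ≤ ∑ k, (C k i - C k j) ^ 2 := by
    intro i j
    have hcol : Cᵀ i - Cᵀ j = P *ᵥ (a i - a j) - (b i - b j) := by
      simp only [C, transpose_mul_toMat_add_colMatR_sub_toMat, mulVec_sub]
      abel
    calc (eunorm (a i - a j) - eunorm (b i - b j)) ^ 2
        = (eunorm (P *ᵥ (a i - a j)) - eunorm (b i - b j)) ^ 2 := by
          rw [eunorm_mulVec_of_mem_orthogonalGroup hP]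
      _ ≤ eunorm (Cᵀ i - Cᵀ j) ^ 2 := by
          rw [hcol, ← sq_abs]
          exact pow_le_pow_left₀ (abs_nonneg _) (abs_eunorm_sub_eunorm_le _ _) 2
      _ = ∑ k, (C k i - C k j) ^ 2 := eunorm_sq _
  rw [eunorm, frobR_eq_sqrt_sum_sq, ← Real.sqrt_mul zero_le_three]
  apply Real.sqrt_le_sqrt
  calc ∑ i, (gammaMap a - gammaMap b) i ^ 2
      ≤ ∑ k, ((C k 1 - C k 2) ^ 2 + (C k 2 - C k 0) ^ 2 + (C k 0 - C k 1) ^ 2) := by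
        simp only [Fin.sum_univ_three, Finset.sum_add_distrib, Pi.sub_apply, gammaMap,
          cons_val_zero, cons_val_one, cons_val_two, head_cons, tail_cons]
        gcongr ?_ + ?_ + ?_ <;> apply side
    _ ≤ ∑ k, 3 * ∑ j, C k j ^ 2 := by
        gcongr with k
        rw [Fin.sum_univ_three]
        apply sq_sub_add_sq_sub_add_sq_sub_le
    _ = 3 * ∑ k, ∑ j, C k j ^ 2 := (Finset.mul_sum ..).symm

/-- The side-lengths map of triangles is `√3`-Lipschitz for the orbit distance `d_{E(2)}`. -/
theorem stmt18 (a b : Fin 3 → Fin 2 → ℝ) :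
    eunorm (gammaMap a - gammaMap b) ≤ Real.sqrt 3 * dE (toMat a) (toMat b) := by
  have h3 : 0 < Real.sqrt 3 := by positivity
  rw [← div_le_iff₀' h3]
  exact le_dE fun P hP q => (div_le_iff₀' h3).2 (eunorm_gammaMap_sub_le a b hP q)
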